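/- arXiv:2211.04871 — 4 statements merged into one kernel-verified Lean document; each statement's English description precedes it below -/
import Mathlib

section
/- If a word w over [n] with A(w) = [n] 12-represents a labeled graph G, and x, y, z are vertices with labels satisfying x < y < z such that xy ∈ E(G) and yz ∈ E(G), then xz ∈ E(G). In other words, no 12-representable labeled graph contains an induced copy of I_3: a path x–y–z with labels x < y < z and xz ∉ E(G). -/
/-- The subword of `w` consisting of the occurrences of `x` and `y`. -/
def subw {n : ℕ} (w : List (Fin n)) (x y : Fin n) : List (Fin n) :=
  w.filter fun a => decide (a = x ∨ a = y)

/-- A word has a 12-match if some letter is immediately followed by a strictly larger one. -/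
def Has12 {n : ℕ} (s : List (Fin n)) : Prop :=
  ∃ a b : Fin n, a < b ∧ [a, b] <:+: s

/-- `w` 12-represents the labeled graph `G` on `Fin n`. -/
def Rep12 {n : ℕ} (w : List (Fin n)) (G : SimpleGraph (Fin n)) : Prop :=
  (∀ i : Fin n, i ∈ w) ∧
  ∀ x y : Fin n, x ≠ y → (G.Adj x y ↔ ¬ Has12 (subw w x y))

/-- A graph is 12-representable if some labeling of its vertices admits a 12-representant. -/
def Rep12able {V : Type} [Fintype V] (G : SimpleGraph V) : Prop :=
  ∃ (f : V ≃ Fin (Fintype.card V)) (w : List (Fin (Fintype.card V))),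
    Rep12 w (G.map f.toEmbedding)

/-!
Within `w_{a,b}` for `a < b`, a 12-match exists iff some `a` precedes some `b` in `w`: between
an `a` and a later `b` there is an adjacent pair `a b`. So `xz ∉ E(G)` means an `x` occurs before
a `z`; wherever `y` occurs, it then comes after that `x` or before that `z`, which puts a 12-match
in `w_{x,y}` or in `w_{y,z}`.
-/

namespace List

variable {α : Type*}

theorem infix_pair_of_sublist_of_forall_mem {a b : α} :
    ∀ {s : List α}, (∀ c ∈ s, c = a ∨ c = b) → [a, b] <+ s → [a, b] <:+: s
  | [], _, h => by simp at h
  | c :: t, hmem, hsub => by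
    have hmem_t : ∀ c ∈ t, c = a ∨ c = b := fun c hc => hmem c (mem_cons_of_mem _ hc)
    rcases sublist_cons_iff.mp hsub with h | ⟨r, hr, hbt⟩
    · exact infix_cons (infix_pair_of_sublist_of_forall_mem hmem_t h)
    · obtain ⟨rfl, rfl⟩ := cons.inj hr
      rcases t with _ | ⟨d, t'⟩
      · simp at hbt
      by_cases hdb : d = b
      · exact ⟨[], t', by simp [hdb]⟩
      have hda : d = a := (hmem_t d mem_cons_self).resolve_right hdb
      have hbt' : b ∈ t' :=
        (mem_cons.mp (singleton_sublist.mp hbt)).resolve_left (Ne.symm hdb)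
      have : [a, b] <+ d :: t' := hda ▸ (singleton_sublist.mpr hbt').cons_cons d
      exact infix_cons (infix_pair_of_sublist_of_forall_mem hmem_t this)

theorem Sublist.pair_sublist_or_of_mem {x y z : α} {w : List α} (hxz : [x, z] <+ w)
    (hy : y ∈ w) :
    [x, y] <+ w ∨ [y, z] <+ w := by
  obtain ⟨r₁, r₂, rfl, hx, hz⟩ := cons_sublist_iff.mp hxz
  rcases mem_append.mp hy with hy | hy
  · exact .inr ((singleton_sublist.mpr hy).append hz)
  · exact .inl ((singleton_sublist.mpr hx).append (singleton_sublist.mpr hy))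

end List

open List

theorem mem_subw {n : ℕ} {w : List (Fin n)} {a b c : Fin n} (hc : c ∈ subw w a b) :
    c = a ∨ c = b := by
  simpa using of_mem_filter hc

theorem has12_subw_iff {n : ℕ} {w : List (Fin n)} {a b : Fin n} (hab : a < b) :
    Has12 (subw w a b) ↔ [a, b] <+ w := by
  constructor
  · rintro ⟨c, d, hcd, hinf⟩
    have hc := mem_subw (hinf.sublist.mem (by simp : c ∈ [c, d]))
    have hd := mem_subw (hinf.sublist.mem (by simp : d ∈ [c, d]))
    obtain ⟨rfl, rfl⟩ : c = a ∧ d = b := by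
      rcases hc with rfl | rfl <;> rcases hd with rfl | rfl <;> simp_all [not_lt_of_gt hab]
    exact hinf.sublist.trans filter_sublist
  · intro h
    have hsub : [a, b] <+ subw w a b := by
      simpa [subw] using h.filter (fun e => decide (e = a ∨ e = b))
    exact ⟨a, b, hab, infix_pair_of_sublist_of_forall_mem (fun _ => mem_subw) hsub⟩

/-- A 12-representable labeled graph contains no induced copy of $I_3$:
if $x<y<z$, $xy,yz\in E$ then $xz\in E$. -/
theorem no_I3_of_rep12 {n : ℕ} (w : List (Fin n)) (G : SimpleGraph (Fin n))
    (hw : Rep12 w G) (x y z : Fin n) (hxy : x < y) (hyz : y < z)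
    (exy : G.Adj x y) (eyz : G.Adj y z) : G.Adj x z := by
  obtain ⟨hall, hadj⟩ := hw
  have hxz := hxy.trans hyz
  rw [hadj x y hxy.ne, has12_subw_iff hxy] at exy
  rw [hadj y z hyz.ne, has12_subw_iff hyz] at eyz
  rw [hadj x z hxz.ne, has12_subw_iff hxz]
  intro h
  rcases h.pair_sublist_or_of_mem (hall y) with h | h
  exacts [exy h, eyz h]
end

section
/- Every interval containment bigraph is 12-representable. More precisely, given a bipartite graph G with bipartition (X,Y) and intervals {I_v : v ∈ V(G)} with pairwise distinct endpoints such that for x ∈ X, y ∈ Y, xy ∈ E(G) iff I_x ⊇ I_y, label each vertex v by the rank of the left endpoint of I_v among all left endpoints; let π_r be the permutation of [n] listing labels in order of right endpoints from left to right, and let π_y, π_x be arbitrary permutations of the labels of Y and of X respectively. Then the word w = π_y π_r π_x 12-represents G. -/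
/-!
A word on two letters `x < y` avoids the pattern 12 exactly when it is weakly decreasing, i.e.
when no `x` occurs before a `y`. In `w = πy ++ πr ++ πx` every vertex of `Y` occurs before all of
`πr`, which in turn occurs before every vertex of `X`; so for `x < y` some `x` precedes some `y`
unless `x ∈ X` and `y ∈ Y`, and in that case exactly when `x` precedes `y` in `πr`, i.e. when
`r x < r y`. Since `x < y` means `ℓ x < ℓ y`, the pair is non-adjacent in `G` in exactly the same
cases.
-/

namespace List

variable {α : Type*} {a b : α} {l l₁ l₂ : List α}

theorem pair_sublist_append_of_mem (ha : a ∈ l₁) (hb : b ∈ l₂) : [a, b] <+ l₁ ++ l₂ :=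
  (singleton_sublist.2 ha).append (singleton_sublist.2 hb)

theorem pair_sublist_append_left_iff (ha : a ∉ l₁) : [a, b] <+ l₁ ++ l₂ ↔ [a, b] <+ l₂ := by
  refine ⟨fun h => ?_, fun h => h.trans (sublist_append_right l₁ l₂)⟩
  obtain ⟨_ | ⟨c, t⟩, l₂', hab, h₁, h₂⟩ := sublist_append_iff.1 h
  · simpa [hab] using h₂
  · obtain rfl : c = a := (cons_eq_cons.1 hab).1.symm
    exact absurd (h₁.subset mem_cons_self) ha

theorem pair_sublist_append_right_iff (hb : b ∉ l₂) : [a, b] <+ l₁ ++ l₂ ↔ [a, b] <+ l₁ := by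
  rw [← reverse_sublist, reverse_append, ← reverse_sublist (l₁ := [a, b])]
  exact pair_sublist_append_left_iff (by simpa using hb)

theorem pair_sublist_or_of_mem (hab : a ≠ b) (ha : a ∈ l) (hb : b ∈ l) :
    [a, b] <+ l ∨ [b, a] <+ l := by
  induction l with
  | nil => simp at ha
  | cons c l ih =>
    rcases mem_cons.1 ha with rfl | ha' <;> rcases mem_cons.1 hb with rfl | hb'
    · exact absurd rfl hab
    · exact Or.inl ((singleton_sublist.2 hb').cons_cons a)
    · exact Or.inr ((singleton_sublist.2 ha').cons_cons b)
    · exact (ih ha' hb').imp (·.cons c) (·.cons c)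

theorem Pairwise.not_pair_sublist_iff {R : α → α → Prop} (hl : l.Pairwise R)
    (hR : ∀ ⦃a b⦄, R a b → ¬R b a) (hab : a ≠ b) (ha : a ∈ l) (hb : b ∈ l) :
    ¬[a, b] <+ l ↔ R b a := by
  have rel_of_sublist : ∀ {c d}, [c, d] <+ l → R c d := fun h => pairwise_pair.1 (hl.sublist h)
  exact ⟨fun h => rel_of_sublist ((pair_sublist_or_of_mem hab ha hb).resolve_left h),
    fun h h' => hR h (rel_of_sublist h')⟩

end List

section Rep12

open List

variable {n : ℕ} {w : List (Fin n)} {x y : Fin n}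

theorem not_has12_iff_pairwise {s : List (Fin n)} : ¬Has12 s ↔ s.Pairwise (· ≥ ·) := by
  rw [← isChain_iff_pairwise, isChain_iff_forall_rel_of_append_cons_cons]
  refine ⟨fun h a b l₁ l₂ hs => not_lt.1 fun hab => h ⟨a, b, hab, l₁, l₂, by simp [hs]⟩, ?_⟩
  rintro h ⟨a, b, hab, l₁, l₂, hs⟩
  exact (h (l₁ := l₁) (l₂ := l₂) (by simp [← hs])).not_gt hab

theorem subw_comm (w : List (Fin n)) (x y : Fin n) : subw w x y = subw w y x := by
  simp only [subw, or_comm]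

theorem has12_subw_iff_pair_sublist (hxy : x < y) : Has12 (subw w x y) ↔ [x, y] <+ w := by
  rw [← not_iff_not, not_has12_iff_pairwise, pairwise_iff_forall_sublist]
  constructor
  · intro h hsub
    have hfilter : [x, y] <+ subw w x y := by
      simpa [subw] using hsub.filter (fun a => decide (a = x ∨ a = y))
    exact (h hfilter).not_gt hxy
  · intro h a b hab
    have hmem : ∀ c ∈ [a, b], c = x ∨ c = y := fun c hc => by
      simpa using (mem_filter.1 (hab.subset hc)).2
    by_contra! hlt
    obtain ⟨rfl, rfl⟩ : a = x ∧ b = y := by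
      rcases hmem a (by simp) with rfl | rfl <;> rcases hmem b (by simp) with rfl | rfl <;>
        simp_all [hxy.not_gt]
    exact h (hab.trans filter_sublist)

theorem rep12_iff_forall_lt {G : SimpleGraph (Fin n)} :
    Rep12 w G ↔ (∀ i, i ∈ w) ∧ ∀ x y, x < y → (G.Adj x y ↔ ¬[x, y] <+ w) := by
  refine and_congr_right fun _ => ⟨fun h x y hxy => ?_, fun h x y hne => ?_⟩
  · rw [← has12_subw_iff_pair_sublist hxy]
    exact h x y hxy.ne
  · rcases hne.lt_or_gt with hlt | hgt
    · rw [has12_subw_iff_pair_sublist hlt]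
      exact h x y hlt
    · rw [G.adj_comm, subw_comm, has12_subw_iff_pair_sublist hgt]
      exact h y x hgt

end Rep12

theorem rep12_of_intervalContainmentBigraph_general {n : ℕ} (G : SimpleGraph (Fin n))
    (X : Set (Fin n))
    (ℓ r : Fin n → ℝ)
    -- labels are by rank of left endpoints
    (hmono : StrictMono ℓ)
    -- (X, Y) is a bipartition of G
    (hX : ∀ x₁ x₂, x₁ ∈ X → x₂ ∈ X → ¬ G.Adj x₁ x₂)
    (hY : ∀ y₁ y₂, y₁ ∉ X → y₂ ∉ X → ¬ G.Adj y₁ y₂)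
    -- edges are interval containments
    (hadj : ∀ x ∈ X, ∀ y ∉ X, G.Adj x y ↔ (ℓ x < ℓ y ∧ r y < r x))
    -- πr lists all vertices in increasing order of right endpoints
    (πr : List (Fin n)) (hπr : πr.Pairwise fun u v => r u < r v)
    (hπrm : ∀ v, v ∈ πr)
    -- πx and πy are arbitrary permutations of X resp. Y
    (πx : List (Fin n)) (hπxm : ∀ v, v ∈ πx ↔ v ∈ X)
    (πy : List (Fin n)) (hπym : ∀ v, v ∈ πy ↔ v ∉ X) :
    Rep12 (πy ++ πr ++ πx) G := by
  refine rep12_iff_forall_lt.2 ⟨fun v => List.mem_append_left _ (List.mem_append_right _ (hπrm v)),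
    fun x y hxy => ?_⟩
  by_cases hx : x ∈ X
  · by_cases hy : y ∈ X
    · refine iff_of_false (hX x y hx hy) (not_not_intro ?_)
      exact List.pair_sublist_append_of_mem (List.mem_append_right _ (hπrm x)) ((hπxm y).2 hy)
    · rw [hadj x hx y hy, hmono.lt_iff_lt, List.pair_sublist_append_right_iff (mt (hπxm y).1 hy),
        List.pair_sublist_append_left_iff (mt (hπym x).1 (not_not_intro hx)),
        hπr.not_pair_sublist_iff (fun _ _ h h' => h.asymm h') hxy.ne (hπrm x) (hπrm y)]
      exact and_iff_right hxy
  · have hnadj : ¬G.Adj x y := fun h => by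
      by_cases hy : y ∈ X
      · rw [G.adj_comm, hadj y hy x hx, hmono.lt_iff_lt] at h
        exact hxy.asymm h.1
      · exact hY x y hx hy h
    refine iff_of_false hnadj (not_not_intro ?_)
    exact (List.pair_sublist_append_of_mem ((hπym x).2 hx) (hπrm y)).trans
      (List.sublist_append_left _ _)

/-- Every interval containment bigraph is 12-representable via the explicit word
`w = πy ++ πr ++ πx`.  Vertices are identified with their labels: `ℓ` is strictly
monotone, so vertex `v` has the `v`-th smallest left endpoint. -/
theorem rep12_of_intervalContainmentBigraph {n : ℕ} (G : SimpleGraph (Fin n))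
    (X : Set (Fin n))
    (ℓ r : Fin n → ℝ)
    -- each interval is nondegenerate
    (hlr : ∀ v, ℓ v < r v)
    -- labels are by rank of left endpoints
    (hmono : StrictMono ℓ)
    -- all endpoints are distinct
    (hrinj : Function.Injective r)
    (hlne : ∀ u v, ℓ u ≠ r v)
    -- (X, Y) is a bipartition of G
    (hX : ∀ x₁ x₂, x₁ ∈ X → x₂ ∈ X → ¬ G.Adj x₁ x₂)
    (hY : ∀ y₁ y₂, y₁ ∉ X → y₂ ∉ X → ¬ G.Adj y₁ y₂)
    -- edges are interval containments
    (hadj : ∀ x ∈ X, ∀ y ∉ X, G.Adj x y ↔ (ℓ x < ℓ y ∧ r y < r x))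
    -- πr lists all vertices in increasing order of right endpoints
    (πr : List (Fin n)) (hπr : πr.Pairwise fun u v => r u < r v)
    (hπrm : ∀ v, v ∈ πr)
    -- πx and πy are arbitrary permutations of X resp. Y
    (πx : List (Fin n)) (hπx : πx.Nodup) (hπxm : ∀ v, v ∈ πx ↔ v ∈ X)
    (πy : List (Fin n)) (hπy : πy.Nodup) (hπym : ∀ v, v ∈ πy ↔ v ∉ X) :
    Rep12 (πy ++ πr ++ πx) G :=
  rep12_of_intervalContainmentBigraph_general G X ℓ r hmono hX hY hadj πr hπr hπrm πx hπxm πy hπym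
end

section
/- Let G be a bipartite graph with bipartition (X,Y) and with a model of intervals I_v = [ℓ_v, r_v], all 2n endpoints distinct, such that for x ∈ X, y ∈ Y: xy ∈ E(G) iff I_x ⊇ I_y. For x ∈ X and y ∈ Y with ℓ_x < ℓ_y, the word w_{{x,y}} formed as in the construction w = π_y π_r π_x (labels by left-endpoint rank, π_r listing labels by right endpoints left to right, π_x and π_y arbitrary orderings of X-labels and Y-labels) has no 12-match if and only if I_x contains I_y; equivalently, w_{{x,y}} equals jjii when r_x > r_y and jiji when r_x < r_y, where i, j are the labels of x, y with i < j. -/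
/-!
The subword `w_{{x,y}}` is `[y] ++ s ++ [x]`, where `s` lists `x` and `y` in increasing order of
right endpoints. If `r y < r x` this gives `yyxx`, which is weakly decreasing and so has no
12-match; if `r x < r y` it gives `yxyx`, whose middle factor `xy` is a 12-match since `x < y`.
-/

namespace List

variable {α : Type*} [DecidableEq α]

theorem filter_eq_singleton_of_nodup {p : α → Bool} {l : List α} {a : α} (hl : l.Nodup)
    (ha : a ∈ l) (hp : ∀ c ∈ l, p c ↔ c = a) : l.filter p = [a] := by
  rw [filter_congr (q := fun c => (c = a : Bool)) fun c hc => by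
      rw [Bool.eq_iff_iff, decide_eq_true_iff]; exact hp c hc,
    filter_eq, count_eq_one_of_mem hl ha, replicate_one]

theorem Pairwise.filter_eq_or_eq {β : Type*} [Preorder β] {f : α → β} {l : List α}
    (hl : l.Pairwise fun u v => f u < f v) {a b : α} (ha : a ∈ l) (hb : b ∈ l) (hab : a ≠ b) :
    (l.filter (fun c => (c = a ∨ c = b : Bool)) = [a, b] ∧ f a < f b) ∨
      (l.filter (fun c => (c = a ∨ c = b : Bool)) = [b, a] ∧ f b < f a) := by
  set m := l.filter fun c => (c = a ∨ c = b : Bool)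
  have hm : m.Pairwise fun u v => f u < f v := hl.sublist filter_sublist
  have hnodup : m.Nodup := (hl.imp fun h => ne_of_apply_ne f h.ne).filter _
  have hperm : [a, b].Perm m :=
    (perm_ext_iff_of_nodup (by simpa using hab) hnodup).mpr fun c => by
      simp only [m, mem_filter, decide_eq_true_eq, mem_cons, not_mem_nil, or_false]
      constructor
      · rintro (rfl | rfl) <;> simp [ha, hb]
      · exact And.right
  rcases pair_perm.mp hperm with h | h <;> rw [h] at hm <;> simp_all

end List

theorem not_has12_of_pairwise_ge {n : ℕ} {s : List (Fin n)} (hs : s.Pairwise (· ≥ ·)) :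
    ¬ Has12 s := by
  rintro ⟨a, b, hab, hinf⟩
  have hba : b ≤ a := by simpa using hs.sublist hinf.sublist
  exact hba.not_gt hab

theorem subword_analysis_ICB_general {n : ℕ} (X : Set (Fin n))
    (ℓ r : Fin n → ℝ)
    (hmono : StrictMono ℓ)
    (πr : List (Fin n)) (hπr : πr.Pairwise fun u v => r u < r v)
    (hπrm : ∀ v, v ∈ πr)
    (πx : List (Fin n)) (hπx : πx.Nodup) (hπxm : ∀ v, v ∈ πx ↔ v ∈ X)
    (πy : List (Fin n)) (hπy : πy.Nodup) (hπym : ∀ v, v ∈ πy ↔ v ∉ X)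
    (x y : Fin n) (hx : x ∈ X) (hy : y ∉ X) (hxy : ℓ x < ℓ y) :
    (¬ Has12 (subw (πy ++ πr ++ πx) x y) ↔ r y < r x) ∧
    (r y < r x → subw (πy ++ πr ++ πx) x y = [y, y, x, x]) ∧
    (r x < r y → subw (πy ++ πr ++ πx) x y = [y, x, y, x]) := by
  have hlt : x < y := hmono.lt_iff_lt.mp hxy
  have hfy : πy.filter (fun c => decide (c = x ∨ c = y)) = [y] :=
    List.filter_eq_singleton_of_nodup hπy ((hπym y).mpr hy) fun c hc => by
      have : c ≠ x := by rintro rfl; exact (hπym c).mp hc hx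
      simp [this]
  have hfx : πx.filter (fun c => decide (c = x ∨ c = y)) = [x] :=
    List.filter_eq_singleton_of_nodup hπx ((hπxm x).mpr hx) fun c hc => by
      have : c ≠ y := by rintro rfl; exact hy ((hπxm c).mp hc)
      simp [this]
  have hword : subw (πy ++ πr ++ πx) x y =
      [y] ++ πr.filter (fun c => decide (c = x ∨ c = y)) ++ [x] := by
    rw [subw, List.filter_append, List.filter_append, hfy, hfx]
  rcases hπr.filter_eq_or_eq (hπrm x) (hπrm y) hlt.ne with ⟨hmid, hr⟩ | ⟨hmid, hr⟩
  · rw [hmid] at hword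
    have h12 : Has12 (subw (πy ++ πr ++ πx) x y) := ⟨x, y, hlt, [y], [x], hword.symm⟩
    exact ⟨iff_of_false (not_not.mpr h12) hr.not_gt, fun h => absurd h hr.not_gt,
      fun _ => hword⟩
  · rw [hmid] at hword
    have hno : ¬ Has12 (subw (πy ++ πr ++ πx) x y) :=
      hword ▸ not_has12_of_pairwise_ge (by simp [hlt.le])
    exact ⟨iff_of_true hno hr, fun _ => hword, fun h => absurd h hr.not_gt⟩

/-- In the construction `w = πy ++ πr ++ πx` for an interval containment bigraph
(vertices labeled by left-endpoint rank, i.e. `ℓ` strictly monotone), for `x ∈ X`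
and `y ∉ X` with `ℓ x < ℓ y` (so the label `x` is smaller than the label `y`):
`w_{{x,y}}` has no 12-match iff `I_x ⊇ I_y`; concretely `w_{{x,y}} = yyxx` when
`r y < r x` and `w_{{x,y}} = yxyx` when `r x < r y`. -/
theorem subword_analysis_ICB {n : ℕ} (X : Set (Fin n))
    (ℓ r : Fin n → ℝ)
    (hlr : ∀ v, ℓ v < r v)
    (hmono : StrictMono ℓ)
    (hrinj : Function.Injective r)
    (hlne : ∀ u v, ℓ u ≠ r v)
    (πr : List (Fin n)) (hπr : πr.Pairwise fun u v => r u < r v)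
    (hπrm : ∀ v, v ∈ πr)
    (πx : List (Fin n)) (hπx : πx.Nodup) (hπxm : ∀ v, v ∈ πx ↔ v ∈ X)
    (πy : List (Fin n)) (hπy : πy.Nodup) (hπym : ∀ v, v ∈ πy ↔ v ∉ X)
    (x y : Fin n) (hx : x ∈ X) (hy : y ∉ X) (hxy : ℓ x < ℓ y) :
    (¬ Has12 (subw (πy ++ πr ++ πx) x y) ↔ r y < r x) ∧
    (r y < r x → subw (πy ++ πr ++ πx) x y = [y, y, x, x]) ∧
    (r x < r y → subw (πy ++ πr ++ πx) x y = [y, x, y, x]) :=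
  subword_analysis_ICB_general X ℓ r hmono πr hπr hπrm πx hπx hπxm πy hπy hπym x y hx hy hxy
end

section
/- A tree contains no subdivision of the claw with each edge subdivided twice (the spider T_3 with three legs of length 3) as a subtree if and only if it is a double caterpillar, i.e., there is a path P in the tree such that every vertex is within distance 2 of P. -/
/-! If `T₃` does not embed, take a longest path `P`. A vertex `w` at distance at least 3 from `P`
would give a copy of `T₃` centred at the vertex `g` of `P` nearest to `w`: the two halves of `P`
at `g` are at least as long as the path from `g` to `w`, by maximality of `P`.

Conversely, let `P` cover a copy of `T₃` with centre `c`. The end of each leg is within distance 2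
of some `pᵢ ∈ P`, which forces the path from `c` to `pᵢ` to leave `c` through that leg. Hence
`d(pᵢ, pⱼ) = d(c, pᵢ) + d(c, pⱼ)` with all `d(c, pᵢ) > 0`, impossible for three vertices of a path
since one of them lies between the other two. -/

/-- The spider `T₃`: a center vertex `0` with three legs of length 3
(`0-1-2-3`, `0-4-5-6`, `0-7-8-9`). -/
def spiderT3 : SimpleGraph (Fin 10) :=
  SimpleGraph.fromEdgeSet
    {s(0, 1), s(1, 2), s(2, 3), s(0, 4), s(4, 5), s(5, 6), s(0, 7), s(7, 8), s(8, 9)}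

namespace SimpleGraph

open Walk

variable {V : Type*} {G : SimpleGraph V} {a b c u v w : V}

lemma Walk.IsPath.reverse_append {A : G.Walk c a} {B : G.Walk c b} (hA : A.IsPath)
    (hB : B.IsPath) (hAB : ∀ z ∈ A.support, z ∈ B.support → z = c) :
    (A.reverse.append B).IsPath := by
  have hc : c ∉ B.support.tail := by
    have := hB.support_nodup
    rw [← B.cons_tail_support, List.nodup_cons] at this
    exact this.1
  rw [isPath_def, support_append, support_reverse, List.nodup_append]
  refine ⟨List.nodup_reverse.2 hA.support_nodup,
    hB.support_nodup.sublist B.support.tail_sublist, ?_⟩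
  rintro z hzA _ hzB rfl
  rw [List.mem_reverse] at hzA
  exact hc (hAB z hzA (List.mem_of_mem_tail hzB) ▸ hzB)

lemma Walk.exists_eq_cons_cons_cons (A : G.Walk c a) (hA : A.length = 3) :
    ∃ x y : V, ∃ (h₁ : G.Adj c x) (h₂ : G.Adj x y) (h₃ : G.Adj y a),
      A = cons h₁ (cons h₂ (cons h₃ nil)) := by
  rcases A with _ | ⟨h₁, _ | ⟨h₂, _ | ⟨h₃, _ | ⟨h₄, A⟩⟩⟩⟩ <;> simp at hA
  exact ⟨_, _, h₁, h₂, h₃, rfl⟩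

lemma exists_spider_of_isPath_reverse_append {d : V} {A : G.Walk c a} {B : G.Walk c b}
    {D : G.Walk c d} (hA : A.length = 3) (hB : B.length = 3) (hD : D.length = 3)
    (hAB : (A.reverse.append B).IsPath) (hAD : (A.reverse.append D).IsPath)
    (hBD : (B.reverse.append D).IsPath) :
    ∃ f : Fin 10 ↪ V, ∀ i j, spiderT3.Adj i j → G.Adj (f i) (f j) := by
  obtain ⟨a₁, a₂, ha₁, ha₂, ha₃, rfl⟩ := A.exists_eq_cons_cons_cons hA
  obtain ⟨b₁, b₂, hb₁, hb₂, hb₃, rfl⟩ := B.exists_eq_cons_cons_cons hB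
  obtain ⟨d₁, d₂, hd₁, hd₂, hd₃, rfl⟩ := D.exists_eq_cons_cons_cons hD
  simp only [isPath_def, reverse_cons, reverse_nil, nil_append, cons_append, support_cons,
    support_nil, List.nodup_cons, List.mem_cons, List.not_mem_nil, or_false, not_or] at hAB hAD hBD
  let l := [c, a₁, a₂, a, b₁, b₂, b, d₁, d₂, d]
  have hl : l.Nodup := by
    simp only [l, List.nodup_cons, List.mem_cons, List.not_mem_nil, or_false, not_or]
    tauto
  refine ⟨⟨l.get, List.nodup_iff_injective_get.1 hl⟩, fun i j hij => ?_⟩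
  simp only [spiderT3, fromEdgeSet_adj, Set.mem_insert_iff, Set.mem_singleton_iff,
    Sym2.eq_iff] at hij
  rcases hij.1 with h | h | h | h | h | h | h | h | h <;>
    rcases h with ⟨rfl, rfl⟩ | ⟨rfl, rfl⟩ <;> simp only [l] <;> solve_by_elim [Adj.symm]

lemma exists_spider_of_isPath {d : V} {A : G.Walk c a} {B : G.Walk c b} {D : G.Walk c d}
    (hA : A.IsPath) (hB : B.IsPath) (hD : D.IsPath)
    (lA : 3 ≤ A.length) (lB : 3 ≤ B.length) (lD : 3 ≤ D.length)
    (hAB : ∀ z ∈ A.support, z ∈ B.support → z = c)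
    (hAD : ∀ z ∈ A.support, z ∈ D.support → z = c)
    (hBD : ∀ z ∈ B.support, z ∈ D.support → z = c) :
    ∃ f : Fin 10 ↪ V, ∀ i j, spiderT3.Adj i j → G.Adj (f i) (f j) := by
  have trunc {x y : V} {X : G.Walk c x} {Y : G.Walk c y} (hX : X.IsPath) (hY : Y.IsPath)
      (hXY : ∀ z ∈ X.support, z ∈ Y.support → z = c) :
      ((X.take 3).reverse.append (Y.take 3)).IsPath :=
    (hX.take 3).reverse_append (hY.take 3) fun z hzX hzY =>
      hXY z ((X.isSubwalk_take 3).support_subset hzX) ((Y.isSubwalk_take 3).support_subset hzY)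
  exact exists_spider_of_isPath_reverse_append (by simp [lA]) (by simp [lB]) (by simp [lD])
    (trunc hA hB hAB) (trunc hA hD hAD) (trunc hB hD hBD)

lemma Walk.exists_isPath_from_support (P : G.Walk u v) (hw : G.Reachable u w) :
    ∃ g ∈ P.support, ∃ R : G.Walk g w, R.IsPath ∧ ∀ z ∈ R.support, z ∈ P.support → z = g := by
  classical
  obtain ⟨g, hg, hmin⟩ := P.support.toFinset.exists_min_image (G.dist · w) ⟨u, by simp⟩
  rw [List.mem_toFinset] at hg
  obtain ⟨R, hR, hRlen⟩ := ((P.takeUntil g hg).reachable.symm.trans hw).exists_path_of_dist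
  refine ⟨g, hg, R, hR, fun z hzR hzP => ?_⟩
  have hsplit := congrArg length (R.take_spec hzR)
  have hdrop := dist_le (R.dropUntil z hzR)
  have hz := hmin z (by simpa using hzP)
  rw [length_append] at hsplit
  exact (eq_of_length_eq_zero (p := R.takeUntil z hzR) (by omega)).symm

namespace IsAcyclic

lemma length_eq_dist (hG : G.IsAcyclic) {p : G.Walk u v} (hp : p.IsPath) :
    p.length = G.dist u v := by
  obtain ⟨q, hq, hlen⟩ := p.reachable.exists_path_of_dist
  have hpq : p = q := congrArg Subtype.val (hG.subsingleton_path u v |>.elim ⟨p, hp⟩ ⟨q, hq⟩)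
  rw [hpq, hlen]

lemma dist_add_dist_of_mem_support (hG : G.IsAcyclic) {p : G.Walk u v} (hp : p.IsPath)
    (hw : w ∈ p.support) :
    G.dist u w + G.dist w v = G.dist u v := by
  classical
  rw [← hG.length_eq_dist (hp.takeUntil hw), ← hG.length_eq_dist (hp.dropUntil hw),
    ← hG.length_eq_dist hp, ← length_append, take_spec]

lemma dist_add_dist_or_of_mem_support (hG : G.IsAcyclic) {p : G.Walk u v} (hp : p.IsPath)
    {x y : V} (hx : x ∈ p.support) (hy : y ∈ p.support) :
    G.dist u x + G.dist x y = G.dist u y ∨ G.dist u y + G.dist x y = G.dist u x := by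
  classical
  rw [← p.take_spec hx, mem_support_append_iff] at hy
  rcases hy with hy | hy
  · have huyx := hG.dist_add_dist_of_mem_support (hp.takeUntil hx) hy
    rw [dist_comm (u := y)] at huyx
    exact .inr huyx
  · have hxyv := hG.dist_add_dist_of_mem_support (hp.dropUntil hx) hy
    have huxv := hG.dist_add_dist_of_mem_support hp hx
    have huyv := hG.dist_add_dist_of_mem_support hp (p.support_dropUntil_subset_support hx hy)
    exact .inl (by omega)

lemma eq_of_mem_support_of_snd_ne (hG : G.IsAcyclic) {A : G.Walk c a} {B : G.Walk c b}
    (hA : A.IsPath) (hB : B.IsPath) (hAB : A.snd ≠ B.snd) :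
    ∀ z ∈ A.support, z ∈ B.support → z = c := by
  classical
  intro z hzA hzB
  by_contra hz
  apply hAB
  rw [← snd_takeUntil hz A hzA, ← snd_takeUntil hz B hzB]
  exact congrArg (·.1.snd)
    (hG.subsingleton_path c z |>.elim ⟨_, hA.takeUntil hzA⟩ ⟨_, hB.takeUntil hzB⟩)

lemma dist_eq_length_add_length (hG : G.IsAcyclic) {A : G.Walk c a} {B : G.Walk c b}
    (hA : A.IsPath) (hB : B.IsPath) (hAB : A.snd ≠ B.snd) : G.dist a b = A.length + B.length := by
  rw [← hG.length_eq_dist (hA.reverse_append hB (hG.eq_of_mem_support_of_snd_ne hA hB hAB)),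
    length_append, length_reverse]

lemma snd_eq_of_dist_lt_length (hG : G.IsAcyclic) {q : G.Walk c a} {r : G.Walk c b}
    (hq : q.IsPath) (hr : r.IsPath) (h : G.dist a b < q.length) : r.snd = q.snd := by
  by_contra hne
  have hab := hG.dist_eq_length_add_length hq hr (Ne.symm hne)
  omega

lemma length_le_dist_of_longest (hG : G.IsAcyclic) {P : G.Walk u v} (hP : P.IsPath)
    (hmax : ∀ x y, G.dist x y ≤ P.length) {g : V} (hg : g ∈ P.support) {R : G.Walk g w}
    (hR : R.IsPath) (hRP : ∀ z ∈ R.support, z ∈ P.support → z = g) :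
    R.length ≤ G.dist u g := by
  classical
  have hRB := hR.reverse_append (hP.dropUntil hg)
    fun z hz hz' => hRP z hz (P.support_dropUntil_subset_support hg hz')
  have hwv := hG.length_eq_dist hRB
  have hB := hG.length_eq_dist (hP.dropUntil hg)
  have hug := hG.dist_add_dist_of_mem_support hP hg
  have hPlen := hG.length_eq_dist hP
  have hwv_le := hmax w v
  rw [length_append, length_reverse] at hwv
  omega

lemma exists_spider_of_longest (hG : G.IsAcyclic) {P : G.Walk u v} (hP : P.IsPath)
    (hmax : ∀ x y, G.dist x y ≤ P.length) {g : V} (hg : g ∈ P.support) {R : G.Walk g w}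
    (hR : R.IsPath) (hRP : ∀ z ∈ R.support, z ∈ P.support → z = g) (h3 : 3 ≤ R.length) :
    ∃ f : Fin 10 ↪ V, ∀ i j, spiderT3.Adj i j → G.Adj (f i) (f j) := by
  classical
  have hu := hG.length_le_dist_of_longest hP hmax hg hR hRP
  have hv := hG.length_le_dist_of_longest hP.reverse (by simpa using hmax) (by simpa using hg) hR
    (by simpa using hRP)
  have hP' : ((P.takeUntil g hg).append (P.dropUntil g hg)).IsPath := by rwa [take_spec]
  refine exists_spider_of_isPath (hP.takeUntil hg).reverse (hP.dropUntil hg) hR ?_ ?_ h3 ?_ ?_ ?_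
  · rw [length_reverse, hG.length_eq_dist (hP.takeUntil hg)]; omega
  · rw [hG.length_eq_dist (hP.dropUntil hg), dist_comm]; omega
  · intro z hz hz'
    rw [support_reverse, List.mem_reverse] at hz
    by_contra hzg
    exact hP'.ne_of_mem_support_of_append hzg hz hz' rfl
  · intro z hz hz'
    rw [support_reverse, List.mem_reverse] at hz
    exact hRP z hz' (P.support_takeUntil_subset_support hg hz)
  · exact fun z hz hz' => hRP z hz' (P.support_dropUntil_subset_support hg hz)

end IsAcyclic

lemma IsTree.not_forall_dist_le_two_of_spider (hG : G.IsTree) {P : G.Walk u v}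
    (hP : P.IsPath) (f : Fin 10 ↪ V) (hf : ∀ i j, spiderT3.Adj i j → G.Adj (f i) (f j)) :
    ¬ ∀ w, ∃ p ∈ P.support, G.dist w p ≤ 2 := by
  intro hcov
  have leg (i j k : Fin 10) (hadj : spiderT3.Adj 0 i ∧ spiderT3.Adj i j ∧ spiderT3.Adj j k)
      (hnd : [0, i, j, k].Nodup) :
      ∃ p ∈ P.support, ∃ r : G.Walk (f 0) p, r.IsPath ∧ r.snd = f i := by
    let q := cons (hf 0 i hadj.1) (cons (hf i j hadj.2.1) (cons (hf j k hadj.2.2) nil))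
    have hq : q.IsPath := (isPath_def _).2 (by simpa [q] using hnd.map f.injective)
    obtain ⟨p, hp, hkp⟩ := hcov (f k)
    obtain ⟨r, hr, -⟩ := hG.connected.exists_path_of_dist (f 0) p
    exact ⟨p, hp, r, hr, hG.isAcyclic.snd_eq_of_dist_lt_length hq hr (by simp [q]; omega)⟩
  obtain ⟨p₁, hp₁, r₁, hr₁, h₁⟩ := leg 1 2 3 (by simp [spiderT3]) (by decide)
  obtain ⟨p₂, hp₂, r₂, hr₂, h₂⟩ := leg 4 5 6 (by simp [spiderT3]) (by decide)
  obtain ⟨p₃, hp₃, r₃, hr₃, h₃⟩ := leg 7 8 9 (by simp [spiderT3]) (by decide)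
  have pos {p : V} {r : G.Walk (f 0) p} {i : Fin 10} (hi : i ≠ 0) (h : r.snd = f i) :
      0 < r.length := by
    rcases r with _ | ⟨_, _⟩
    · exact absurd (f.injective (by simpa using h)) (Ne.symm hi)
    · simp
  have l₁ := pos (by decide) h₁
  have l₂ := pos (by decide) h₂
  have l₃ := pos (by decide) h₃
  have d₁₂ := hG.isAcyclic.dist_eq_length_add_length hr₁ hr₂ (by simp [h₁, h₂])
  have d₁₃ := hG.isAcyclic.dist_eq_length_add_length hr₁ hr₃ (by simp [h₁, h₃])
  have d₂₃ := hG.isAcyclic.dist_eq_length_add_length hr₂ hr₃ (by simp [h₂, h₃])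
  have o₁₂ := hG.isAcyclic.dist_add_dist_or_of_mem_support hP hp₁ hp₂
  have o₁₃ := hG.isAcyclic.dist_add_dist_or_of_mem_support hP hp₁ hp₃
  have o₂₃ := hG.isAcyclic.dist_add_dist_or_of_mem_support hP hp₂ hp₃
  omega

end SimpleGraph

theorem doubleCaterpillar_iff_no_T3_general {V : Type} [Fintype V]
    (G : SimpleGraph V) (hG : G.IsTree) :
    (¬ ∃ f : Fin 10 ↪ V, ∀ a b : Fin 10, spiderT3.Adj a b → G.Adj (f a) (f b)) ↔
    ∃ (u v : V) (P : G.Walk u v), P.IsPath ∧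
      ∀ w : V, ∃ p ∈ P.support, G.dist w p ≤ 2 := by
  constructor
  · intro hno
    have := hG.connected.nonempty
    obtain ⟨u, v, huv⟩ := G.exists_dist_eq_diam
    obtain ⟨P, hP, hPlen⟩ := hG.connected.exists_path_of_dist u v
    refine ⟨u, v, P, hP, fun w => ?_⟩
    by_contra! hfar
    obtain ⟨g, hg, R, hR, hRP⟩ := P.exists_isPath_from_support (hG.connected u w)
    refine hno (hG.isAcyclic.exists_spider_of_longest hP (fun x y => ?_) hg hR hRP ?_)
    · rw [hPlen, huv]
      exact SimpleGraph.dist_le_diam (SimpleGraph.connected_iff_ediam_ne_top.1 hG.connected)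
    · have hgw := SimpleGraph.dist_le R
      have hwg := hfar g hg
      rw [G.dist_comm] at hwg
      omega
  · rintro ⟨u, v, P, hP, hcov⟩ ⟨f, hf⟩
    exact hG.not_forall_dist_le_two_of_spider hP f hf hcov

/-- A tree contains no copy of the spider `T₃` as a subtree iff it is a double
caterpillar: there is a path such that every vertex is within distance 2 of it. -/
theorem doubleCaterpillar_iff_no_T3 {V : Type} [Fintype V] [Nonempty V]
    (G : SimpleGraph V) (hG : G.IsTree) :
    (¬ ∃ f : Fin 10 ↪ V, ∀ a b : Fin 10, spiderT3.Adj a b → G.Adj (f a) (f b)) ↔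
    ∃ (u v : V) (P : G.Walk u v), P.IsPath ∧
      ∀ w : V, ∃ p ∈ P.support, G.dist w p ≤ 2 :=
  doubleCaterpillar_iff_no_T3_general G hG
end
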